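/- Let X, Y be topological spaces with continuous f : X → ℝ, g : Y → ℝ, let φ : X → Y be continuous with ‖f − g∘φ‖_∞ ≤ ε, and let γ : [0,1] → X be a path. Then height(φ∘γ) ≤ height(γ) + 2ε, where height of a path δ is sup_t h(δ(t)) − inf_t h(δ(t)) for the relevant function h. Consequently d_g(φ(x), φ(x')) ≤ d_f(x, x') + 2ε for all x, x' ∈ X. -/

import Mathlib

/-! Along a path `γ`, the values of `g ∘ φ` stay within `ε` of those of `f`, so by the triangle
inequality any two of them differ by at most the height of `γ` plus `2ε`. Pushing paths forward
along `φ` then transfers the bound to the infima defining the path-height distances. -/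

open unitInterval

/-- The path-height distance (see `pathHeightDist`). -/
noncomputable def pathHeightDist {X : Type*} [TopologicalSpace X] (f : X → ℝ)
    (u v : X) : ENNReal :=
  ⨅ (π : Path u v), EMetric.diam (Set.range fun t : I => f (π t))

open scoped ENNReal

theorem Metric.ediam_range_le_ediam_range_add {ι α : Type*} [PseudoEMetricSpace α]
    {u v : ι → α} {δ : ℝ≥0∞} (h : ∀ i, edist (u i) (v i) ≤ δ) :
    Metric.ediam (Set.range v) ≤ Metric.ediam (Set.range u) + 2 * δ := by
  refine Metric.ediam_le ?_
  rintro _ ⟨s, rfl⟩ _ ⟨t, rfl⟩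
  calc edist (v s) (v t) ≤ edist (v s) (u s) + edist (u s) (u t) + edist (u t) (v t) :=
        edist_triangle4 _ _ _ _
    _ ≤ δ + Metric.ediam (Set.range u) + δ := by
        gcongr
        · exact edist_comm (u s) (v s) ▸ h s
        · exact Metric.edist_le_ediam_of_mem ⟨s, rfl⟩ ⟨t, rfl⟩
        · exact h t
    _ = Metric.ediam (Set.range u) + 2 * δ := by ring

theorem pathHeightDist_comp_le_add {X Y : Type*} [TopologicalSpace X] [TopologicalSpace Y]
    {f : X → ℝ} {g : Y → ℝ} {φ : X → Y} (hφ : Continuous φ) {c : ℝ≥0∞}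
    (h : ∀ (x x' : X) (γ : Path x x'),
      Metric.ediam (Set.range fun t : I => g (φ (γ t))) ≤
        Metric.ediam (Set.range fun t : I => f (γ t)) + c)
    (x x' : X) :
    pathHeightDist g (φ x) (φ x') ≤ pathHeightDist f x x' + c := by
  rw [pathHeightDist, pathHeightDist, ENNReal.iInf_add]
  exact le_iInf fun γ => iInf_le_of_le (γ.map hφ) (h x x' γ)

theorem height_comp_le_and_pathHeightDist_le_general {X Y : Type*}
    [TopologicalSpace X] [TopologicalSpace Y]
    (f : X → ℝ) (g : Y → ℝ)
    (φ : X → Y) (hφ : Continuous φ) (ε : ℝ)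
    (hfφ : ∀ x, |f x - g (φ x)| ≤ ε) :
    (∀ (x x' : X) (γ : Path x x'),
      EMetric.diam (Set.range fun t : I => g (φ (γ t))) ≤
        EMetric.diam (Set.range fun t : I => f (γ t)) + ENNReal.ofReal (2 * ε)) ∧
    (∀ x x' : X,
      pathHeightDist g (φ x) (φ x') ≤ pathHeightDist f x x' + ENNReal.ofReal (2 * ε)) := by
  have close : ∀ x, edist (f x) (g (φ x)) ≤ ENNReal.ofReal ε := fun x => by
    rw [edist_dist, Real.dist_eq]
    exact ENNReal.ofReal_le_ofReal (hfφ x)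
  have height_le : ∀ (x x' : X) (γ : Path x x'),
      Metric.ediam (Set.range fun t : I => g (φ (γ t))) ≤
        Metric.ediam (Set.range fun t : I => f (γ t)) + ENNReal.ofReal (2 * ε) := by
    intro x x' γ
    rw [ENNReal.ofReal_mul zero_le_two, ENNReal.ofReal_ofNat]
    exact Metric.ediam_range_le_ediam_range_add fun t => close (γ t)
  exact ⟨height_le, pathHeightDist_comp_le_add hφ height_le⟩

/-- If `‖f − g∘φ‖_∞ ≤ ε`, then for any path `γ` in `X` the height of `φ∘γ` (with respect
to `g`) is at most the height of `γ` (with respect to `f`) plus `2ε`; consequently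
`d_g(φ(x), φ(x')) ≤ d_f(x, x') + 2ε`. -/
theorem height_comp_le_and_pathHeightDist_le {X Y : Type*}
    [TopologicalSpace X] [TopologicalSpace Y]
    (f : X → ℝ) (g : Y → ℝ) (hf : Continuous f) (hg : Continuous g)
    (φ : X → Y) (hφ : Continuous φ) (ε : ℝ) (hε : 0 ≤ ε)
    (hfφ : ∀ x, |f x - g (φ x)| ≤ ε) :
    (∀ (x x' : X) (γ : Path x x'),
      EMetric.diam (Set.range fun t : I => g (φ (γ t))) ≤
        EMetric.diam (Set.range fun t : I => f (γ t)) + ENNReal.ofReal (2 * ε)) ∧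
    (∀ x x' : X,
      pathHeightDist g (φ x) (φ x') ≤ pathHeightDist f x x' + ENNReal.ofReal (2 * ε)) :=
  height_comp_le_and_pathHeightDist_le_general f g φ hφ ε hfφ
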